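/- Let z ∈ k[X] be a nonzero polynomial with d(z) = 0 and e(z) = w·z for a natural number w, and let i be an integer with 0 ≤ i ≤ min(n, w). If τ_i(z) ≠ 0, then d̂^{n+w−2i}(τ_i(z)) ≠ 0 and d̂^{n+w−2i+1}(τ_i(z)) = 0; that is, ord(τ_i(z)) = n + ord(z) − 2i. -/
import Mathlib


open MvPolynomial Finset

/-- The Weitzenböck derivation `d` on `k[x_0,…,x_n]`: `d(x_i) = x_{i-1}` for
`1 ≤ i ≤ n` and `d(x_0) = 0`. -/
noncomputable def weitz (k : Type*) [Field k] [CharZero k] (n : ℕ) :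
    Derivation k (MvPolynomial (Fin (n + 1)) k) (MvPolynomial (Fin (n + 1)) k) :=
  mkDerivation k (fun i : Fin (n + 1) =>
    if _ : (i : ℕ) = 0 then 0
    else X (⟨(i : ℕ) - 1, by have := i.isLt; omega⟩ : Fin (n + 1)))

/-- The derivation `d̂` on `k[x_0,…,x_n]`: `d̂(x_i) = (i+1)(n−i)·x_{i+1}` for
`0 ≤ i ≤ n−1` and `d̂(x_n) = 0`. -/
noncomputable def dhat (k : Type*) [Field k] [CharZero k] (n : ℕ) :
    Derivation k (MvPolynomial (Fin (n + 1)) k) (MvPolynomial (Fin (n + 1)) k) :=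
  mkDerivation k (fun i : Fin (n + 1) =>
    if h : (i : ℕ) = n then 0
    else ((((i : ℕ) + 1) * (n - (i : ℕ)) : ℕ) : k) •
      X (⟨(i : ℕ) + 1, by have := i.isLt; omega⟩ : Fin (n + 1)))

/-- The derivation `e` on `k[x_0,…,x_n]`: `e(x_i) = (n−2i)·x_i`. -/
noncomputable def ee (k : Type*) [Field k] [CharZero k] (n : ℕ) :
    Derivation k (MvPolynomial (Fin (n + 1)) k) (MvPolynomial (Fin (n + 1)) k) :=
  mkDerivation k (fun i : Fin (n + 1) => ((n : ℤ) - 2 * (i : ℕ)) • X i)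

set_option linter.unusedSectionVars false
set_option linter.unusedVariables false

section Aux

variable {k : Type*} [Field k] [CharZero k] {n : ℕ}

lemma weitz_X_zero {m : ℕ} (h : m < n + 1) (h0 : m = 0) :
    weitz k n (X (⟨m, h⟩ : Fin (n + 1))) = 0 := by
  unfold weitz; rw [mkDerivation_X]; exact dif_pos h0

lemma weitz_X_succ {m : ℕ} (h : m < n + 1) (h0 : m ≠ 0) :
    weitz k n (X (⟨m, h⟩ : Fin (n + 1))) = X (⟨m - 1, by omega⟩ : Fin (n + 1)) := by
  unfold weitz; rw [mkDerivation_X]; exact dif_neg h0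

lemma dhat_X_top {m : ℕ} (h : m < n + 1) (h0 : m = n) :
    dhat k n (X (⟨m, h⟩ : Fin (n + 1))) = 0 := by
  unfold dhat; rw [mkDerivation_X]; exact dif_pos h0

lemma dhat_X_lt {m : ℕ} (h : m < n + 1) (h0 : m ≠ n) :
    dhat k n (X (⟨m, h⟩ : Fin (n + 1))) =
      (((m + 1) * (n - m) : ℕ) : k) • X (⟨m + 1, by omega⟩ : Fin (n + 1)) := by
  unfold dhat; rw [mkDerivation_X]; exact dif_neg h0

lemma ee_X' (i : Fin (n + 1)) :
    ee k n (X i) = ((n : k) - 2 * ((i : ℕ) : k)) • X i := by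
  unfold ee; rw [mkDerivation_X, ← Int.cast_smul_eq_zsmul k]
  congr 1; push_cast; ring

lemma comm_wd (p : MvPolynomial (Fin (n + 1)) k) :
    weitz k n (dhat k n p) = dhat k n (weitz k n p) + ee k n p := by
  have h : ⁅weitz k n, dhat k n⁆ = ee k n := by
    apply derivation_ext
    intro i
    obtain ⟨m, hm⟩ := i
    rw [Derivation.commutator_apply, ee_X']
    by_cases htop : m = n
    · rw [dhat_X_top hm htop]
      by_cases h0 : m = 0
      · rw [weitz_X_zero hm h0, map_zero, map_zero, sub_zero]
        have hn0 : n = 0 := by omega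
        subst h0
        simp [hn0]
      · rw [weitz_X_succ hm h0, map_zero, zero_sub,
          dhat_X_lt (show m - 1 < n + 1 by omega) (by omega), ← neg_smul]
        have he : (⟨m - 1 + 1, by omega⟩ : Fin (n + 1)) = ⟨m, hm⟩ := by
          ext; simp; omega
        rw [he]
        congr 1
        subst htop
        rw [show m - 1 + 1 = m from by omega, show m - (m - 1) = 1 from by omega]
        push_cast
        ring
    · rw [dhat_X_lt hm htop, Derivation.map_smul,
        weitz_X_succ (show m + 1 < n + 1 by omega) (by omega)]
      have he : (⟨m + 1 - 1, by omega⟩ : Fin (n + 1)) = ⟨m, hm⟩ := by ext; simp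
      rw [he]
      by_cases h0 : m = 0
      · subst h0
        rw [weitz_X_zero hm rfl, map_zero, sub_zero]
        congr 1
        push_cast [Nat.cast_sub (show (0:ℕ) ≤ n by omega)]
        ring
      · rw [weitz_X_succ hm h0, dhat_X_lt (show m - 1 < n + 1 by omega) (by omega)]
        have he2 : (⟨m - 1 + 1, by omega⟩ : Fin (n + 1)) = ⟨m, hm⟩ := by
          ext; simp; omega
        rw [he2, ← sub_smul]
        congr 1
        have h1 : m ≤ n := by omega
        have h2 : (1:ℕ) ≤ m := by omega
        push_cast [Nat.cast_sub h1, Nat.cast_sub h2,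
          Nat.cast_sub (show m - 1 ≤ n by omega)]
        ring
  have := Derivation.congr_fun h p
  rw [Derivation.commutator_apply] at this
  linear_combination this

lemma comm_ed (p : MvPolynomial (Fin (n + 1)) k) :
    ee k n (dhat k n p) = dhat k n (ee k n p) - (2 : k) • dhat k n p := by
  have h : ⁅ee k n, dhat k n⁆ = (-2 : k) • dhat k n := by
    apply derivation_ext
    intro i
    obtain ⟨m, hm⟩ := i
    rw [Derivation.commutator_apply, Derivation.smul_apply]
    by_cases htop : m = n
    · rw [dhat_X_top hm htop, ee_X', Derivation.map_smul, dhat_X_top hm htop]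
      simp
    · rw [dhat_X_lt hm htop, ee_X', Derivation.map_smul, ee_X', Derivation.map_smul,
        dhat_X_lt hm htop, smul_smul, smul_smul, smul_smul, ← sub_smul]
      congr 1
      simp only [Fin.val_mk]
      push_cast
      ring
  have := Derivation.congr_fun h p
  rw [Derivation.commutator_apply, Derivation.smul_apply, neg_smul] at this
  rw [MvPolynomial.smul_eq_C_mul] at this ⊢
  linear_combination this

lemma iter_smul (D : Derivation k (MvPolynomial (Fin (n + 1)) k) (MvPolynomial (Fin (n + 1)) k))
    (m : ℕ) (c : k) (p : MvPolynomial (Fin (n + 1)) k) :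
    (⇑D)^[m] (c • p) = c • (⇑D)^[m] p := by
  induction m generalizing p with
  | zero => simp
  | succ m ih =>
    rw [Function.iterate_succ_apply, Derivation.map_smul, ih, ← Function.iterate_succ_apply]

lemma iter_zero (D : Derivation k (MvPolynomial (Fin (n + 1)) k) (MvPolynomial (Fin (n + 1)) k))
    (m : ℕ) : (⇑D)^[m] 0 = 0 :=
  Function.iterate_fixed (map_zero D) m

lemma iter_add (D : Derivation k (MvPolynomial (Fin (n + 1)) k) (MvPolynomial (Fin (n + 1)) k))
    (m : ℕ) (p q : MvPolynomial (Fin (n + 1)) k) :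
    (⇑D)^[m] (p + q) = (⇑D)^[m] p + (⇑D)^[m] q := by
  induction m generalizing p q with
  | zero => simp
  | succ m ih =>
    rw [Function.iterate_succ_apply, map_add, ih, ← Function.iterate_succ_apply,
      ← Function.iterate_succ_apply]

lemma ee_dhat_iter {v : MvPolynomial (Fin (n + 1)) k} {c : k}
    (hev : ee k n v = c • v) (s : ℕ) :
    ee k n ((⇑(dhat k n))^[s] v) = (c - 2 * (s : k)) • (⇑(dhat k n))^[s] v := by
  induction s with
  | zero => simpa using hev
  | succ s ih =>
    rw [Function.iterate_succ_apply' (⇑(dhat k n)) s v, comm_ed, ih, Derivation.map_smul,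
      ← sub_smul]
    congr 1
    push_cast
    ring

lemma weitz_dhat_iter {v : MvPolynomial (Fin (n + 1)) k} {c : k}
    (hv : weitz k n v = 0) (hev : ee k n v = c • v) (s : ℕ) :
    weitz k n ((⇑(dhat k n))^[s + 1] v) =
      (((s : k) + 1) * (c - (s : k))) • (⇑(dhat k n))^[s] v := by
  induction s with
  | zero =>
    rw [Function.iterate_succ_apply', Function.iterate_zero, id_eq, comm_wd, hv, map_zero,
      zero_add, hev]
    congr 1
    push_cast
    ring
  | succ s ih =>
    rw [Function.iterate_succ_apply' (⇑(dhat k n)) (s + 1) v, comm_wd, ih, Derivation.map_smul,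
      ee_dhat_iter hev (s + 1),
      ← Function.iterate_succ_apply' (⇑(dhat k n)) s v, ← add_smul]
    congr 1
    push_cast
    ring

lemma exists_scalar {v : MvPolynomial (Fin (n + 1)) k} {N : ℕ}
    (hv : weitz k n v = 0) (hev : ee k n v = (N : k) • v) :
    ∀ s, s ≤ N → ∃ u : k, u ≠ 0 ∧ (⇑(weitz k n))^[s] ((⇑(dhat k n))^[s] v) = u • v := by
  intro s
  induction s with
  | zero => exact fun _ => ⟨1, one_ne_zero, by simp⟩
  | succ s ih =>
    intro hs
    obtain ⟨u, hu, hu2⟩ := ih (by omega)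
    refine ⟨((s : k) + 1) * ((N : k) - s) * u, ?_, ?_⟩
    · have h1 : ((s : k) + 1) ≠ 0 := by
        have := Nat.cast_ne_zero (R := k).mpr (Nat.succ_ne_zero s)
        push_cast at this; exact this
      have h2 : ((N : k) - s) ≠ 0 := by
        rw [sub_ne_zero]
        intro h
        exact (show (N : ℕ) ≠ s by omega) (Nat.cast_injective h)
      exact mul_ne_zero (mul_ne_zero h1 h2) hu
    · rw [Function.iterate_succ_apply, weitz_dhat_iter hv hev s, iter_smul, hu2, smul_smul,
        mul_assoc]

lemma dhat_iter_ne_zero {v : MvPolynomial (Fin (n + 1)) k} {N : ℕ} (hv0 : v ≠ 0)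
    (hv : weitz k n v = 0) (hev : ee k n v = (N : k) • v) :
    (⇑(dhat k n))^[N] v ≠ 0 := by
  obtain ⟨u, hu, hu2⟩ := exists_scalar hv hev N le_rfl
  intro h
  rw [h, iter_zero] at hu2
  rcases smul_eq_zero.mp hu2.symm with h' | h'
  · exact hu h'
  · exact hv0 h'

lemma dhat_iter_X_zero : ∀ (m : ℕ) (j : Fin (n + 1)), n - (j : ℕ) < m →
    (⇑(dhat k n))^[m] (X j) = 0 := by
  intro m
  induction m with
  | zero => intro j h; omega
  | succ m ih =>
    intro j h
    obtain ⟨jv, hj⟩ := j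
    rw [Function.iterate_succ_apply]
    by_cases htop : jv = n
    · rw [dhat_X_top hj htop, iter_zero]
    · rw [dhat_X_lt hj htop, iter_smul,
        ih ⟨jv + 1, by omega⟩ (by simp only [Fin.val_mk] at h ⊢; omega), smul_zero]

lemma nil_mono {p : MvPolynomial (Fin (n + 1)) k} {a b : ℕ}
    (h : (⇑(dhat k n))^[a] p = 0) (hab : a ≤ b) : (⇑(dhat k n))^[b] p = 0 := by
  obtain ⟨d, rfl⟩ := Nat.exists_eq_add_of_le hab
  rw [show a + d = d + a from Nat.add_comm a d, Function.iterate_add_apply, h, iter_zero]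

lemma nil_mul : ∀ (s a b : ℕ) (p q : MvPolynomial (Fin (n + 1)) k), a + b = s →
    (⇑(dhat k n))^[a] p = 0 → (⇑(dhat k n))^[b] q = 0 → (⇑(dhat k n))^[s] (p * q) = 0 := by
  intro s
  induction s with
  | zero =>
    intro a b p q hs hp hq
    have ha : a = 0 := by omega
    subst ha
    simp only [Function.iterate_zero, id_eq] at hp ⊢
    rw [hp, zero_mul]
  | succ s ih =>
    intro a b p q hs hp hq
    rcases Nat.eq_zero_or_pos a with ha | ha
    · subst ha
      simp only [Function.iterate_zero, id_eq] at hp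
      rw [hp, zero_mul, iter_zero]
    rcases Nat.eq_zero_or_pos b with hb | hb
    · subst hb
      simp only [Function.iterate_zero, id_eq] at hq
      rw [hq, mul_zero, iter_zero]
    rw [Function.iterate_succ_apply, Derivation.leibniz, smul_eq_mul, smul_eq_mul, iter_add]
    have h1 : (⇑(dhat k n))^[s] (p * dhat k n q) = 0 := by
      apply ih a (b - 1) p _ (by omega) hp
      have hq' := hq
      rw [show b = b - 1 + 1 from by omega, Function.iterate_succ_apply] at hq'
      exact hq'
    have h2 : (⇑(dhat k n))^[s] (q * dhat k n p) = 0 := by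
      apply ih b (a - 1) q _ (by omega) hq
      have hp' := hp
      rw [show a = a - 1 + 1 from by omega, Function.iterate_succ_apply] at hp'
      exact hp'
    rw [h1, h2, add_zero]

lemma nil_all (p : MvPolynomial (Fin (n + 1)) k) : ∃ M, (⇑(dhat k n))^[M] p = 0 := by
  induction p using MvPolynomial.induction_on with
  | C a =>
    refine ⟨1, ?_⟩
    have : dhat k n (C a) = 0 := by
      rw [← MvPolynomial.algebraMap_eq]
      exact Derivation.map_algebraMap _ a
    simp [this]
  | add p q hp hq =>
    obtain ⟨Mp, hMp⟩ := hp
    obtain ⟨Mq, hMq⟩ := hq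
    exact ⟨Mp + Mq, by
      rw [iter_add, nil_mono hMp (Nat.le_add_right _ _), nil_mono hMq (Nat.le_add_left _ _),
        add_zero]⟩
  | mul_X p j hp =>
    obtain ⟨M, hM⟩ := hp
    exact ⟨M + (n + 1), nil_mul (M + (n + 1)) M (n + 1) p (X j) rfl hM
      (dhat_iter_X_zero (n + 1) j (by omega))⟩

lemma vanish_aux {c : k} (hc : ∀ s : ℕ, c ≠ (s : k)) :
    ∀ (M : ℕ) (u : MvPolynomial (Fin (n + 1)) k), weitz k n u = 0 → ee k n u = c • u →
      (⇑(dhat k n))^[M] u = 0 → u = 0 := by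
  intro M
  induction M with
  | zero => intro u _ _ h; simpa using h
  | succ M ih =>
    intro u hu heu hM
    apply ih u hu heu
    have h := weitz_dhat_iter hu heu M
    rw [hM, map_zero] at h
    have hcoef : ((M : k) + 1) * (c - M) ≠ 0 := by
      have h1 : ((M : k) + 1) ≠ 0 := by
        have := Nat.cast_ne_zero (R := k).mpr (Nat.succ_ne_zero M)
        push_cast at this; exact this
      exact mul_ne_zero h1 (sub_ne_zero.mpr (hc M))
    exact ((smul_eq_zero.mp h.symm).resolve_left hcoef)

lemma vanish {u : MvPolynomial (Fin (n + 1)) k} {c : k} (hc : ∀ s : ℕ, c ≠ (s : k))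
    (hu : weitz k n u = 0) (heu : ee k n u = c • u) : u = 0 := by
  obtain ⟨M, hM⟩ := nil_all u
  exact vanish_aux hc M u hu heu hM

end Aux

/-- The Casimir element `τ_i(z) = Σ_{k=0}^{i} (−1)^k ((w−k)!/(k!·w!)) x_{i−k} d̂^k(z)`
associated to a kernel element `z` of weight `w`, for `i ≤ n`. -/
noncomputable def tau (k : Type*) [Field k] [CharZero k] (n w i : ℕ) (hi : i ≤ n)
    (z : MvPolynomial (Fin (n + 1)) k) : MvPolynomial (Fin (n + 1)) k :=
  ∑ j ∈ Finset.range (i + 1),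
    ((-1 : k) ^ j * ((w - j).factorial : k) / ((j.factorial * w.factorial : ℕ) : k)) •
      (X (⟨i - j, by omega⟩ : Fin (n + 1)) * (⇑(dhat k n))^[j] z)

section Tau

variable {k : Type*} [Field k] [CharZero k] {n : ℕ}

lemma coef_identity (w m : ℕ) (hm : m < w) :
    ((-1 : k) ^ (m + 1) * ((w - (m + 1)).factorial : k) /
        (((m + 1).factorial * w.factorial : ℕ) : k)) * (((m : k) + 1) * ((w : k) - m)) =
      -((-1 : k) ^ m * ((w - m).factorial : k) / ((m.factorial * w.factorial : ℕ) : k)) := by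
  have h2 : (w - m).factorial = (w - m) * (w - (m + 1)).factorial := by
    rw [show w - m = (w - (m + 1)) + 1 from by omega, Nat.factorial_succ,
      show w - (m + 1) + 1 = w - m from by omega]
  have h3 : ((w : k) - m) = ((w - m : ℕ) : k) := (Nat.cast_sub hm.le).symm
  rw [h3, h2, Nat.factorial_succ]
  have f1 : (m.factorial : k) ≠ 0 := Nat.cast_ne_zero.2 m.factorial_ne_zero
  have f2 : (w.factorial : k) ≠ 0 := Nat.cast_ne_zero.2 w.factorial_ne_zero
  have f3 : ((w - (m + 1)).factorial : k) ≠ 0 := Nat.cast_ne_zero.2 (w - (m+1)).factorial_ne_zero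
  have f4 : ((m : k) + 1) ≠ 0 := by
    have := Nat.cast_ne_zero (R := k).mpr (Nat.succ_ne_zero m)
    push_cast at this; exact this
  have f5 : ((w - m : ℕ) : k) ≠ 0 := Nat.cast_ne_zero.2 (by omega)
  push_cast
  field_simp
  ring

lemma ee_tau {z : MvPolynomial (Fin (n + 1)) k} (w i : ℕ) (hin : i ≤ n) (hiw : i ≤ w)
    (he : ee k n z = (w : k) • z) :
    ee k n (tau k n w i hin z) = ((n : k) + w - 2 * i) • tau k n w i hin z := by
  unfold tau
  rw [map_sum, Finset.smul_sum]
  refine Finset.sum_congr rfl fun j hj => ?_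
  rw [Finset.mem_range] at hj
  have hji : j ≤ i := by omega
  rw [Derivation.map_smul, Derivation.leibniz, ee_dhat_iter he j, ee_X']
  simp only [smul_eq_mul, MvPolynomial.smul_eq_C_mul, Fin.val_mk, Nat.cast_sub hji,
    map_sub, map_add, map_mul, map_ofNat, map_natCast, map_one, map_pow, map_neg, map_div₀]
  ring

lemma weitz_tau {z : MvPolynomial (Fin (n + 1)) k} (w i : ℕ) (hin : i ≤ n) (hiw : i ≤ w)
    (hd : weitz k n z = 0) (he : ee k n z = (w : k) • z) :
    weitz k n (tau k n w i hin z) = 0 := by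
  unfold tau
  rw [map_sum]
  have key : ∀ j ∈ Finset.range (i + 1),
      weitz k n (((-1 : k) ^ j * ((w - j).factorial : k) / ((j.factorial * w.factorial : ℕ) : k)) •
        (X (⟨i - j, by omega⟩ : Fin (n + 1)) * (⇑(dhat k n))^[j] z))
      = (if j < i then
            ((-1 : k) ^ j * ((w - j).factorial : k) / ((j.factorial * w.factorial : ℕ) : k)) •
              (X (⟨i - j - 1, by omega⟩ : Fin (n + 1)) * (⇑(dhat k n))^[j] z)
          else 0)
        - (if 1 ≤ j then
            ((-1 : k) ^ (j - 1) * ((w - (j - 1)).factorial : k) /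
                (((j - 1).factorial * w.factorial : ℕ) : k)) •
              (X (⟨i - j, by omega⟩ : Fin (n + 1)) * (⇑(dhat k n))^[j - 1] z)
          else 0) := by
    intro j hj
    rw [Finset.mem_range] at hj
    have hji : j ≤ i := by omega
    rw [Derivation.map_smul, Derivation.leibniz]
    rcases Nat.eq_zero_or_pos j with h0 | h0
    · subst h0
      simp only [Function.iterate_zero, id_eq]
      rw [hd, smul_zero, zero_add]
      by_cases hi0 : i = 0
      · rw [weitz_X_zero (by omega) (by omega), if_neg (by omega), if_neg (by omega)]
        simp
      · rw [weitz_X_succ (by omega) (by omega), if_pos (by omega), if_neg (by omega), sub_zero]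
        rw [smul_eq_mul, mul_comm z]
    · obtain ⟨m, rfl⟩ : ∃ m, j = m + 1 := ⟨j - 1, by omega⟩
      simp only [Nat.add_sub_cancel]
      have hmw : m < w := by omega
      rw [weitz_dhat_iter hd he m]
      by_cases hlt : m + 1 < i
      · rw [weitz_X_succ (by omega) (by omega), if_pos hlt, if_pos (by omega)]
        rw [smul_add, smul_eq_mul, smul_eq_mul, mul_smul_comm, smul_smul, coef_identity w m hmw,
          mul_comm ((⇑(dhat k n))^[m + 1] z), neg_smul]
        abel
      · have hji' : i - (m + 1) = 0 := by omega
        rw [weitz_X_zero (by omega) hji', if_neg (by omega), if_pos (by omega), smul_zero,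
          add_zero, zero_sub]
        rw [smul_eq_mul, mul_smul_comm, smul_smul, coef_identity w m hmw, neg_smul]
  rw [Finset.sum_congr rfl key, Finset.sum_sub_distrib]
  have h1 : (∑ j ∈ Finset.range (i + 1), (if j < i then
        ((-1 : k) ^ j * ((w - j).factorial : k) / ((j.factorial * w.factorial : ℕ) : k)) •
          (X (⟨i - j - 1, by omega⟩ : Fin (n + 1)) * (⇑(dhat k n))^[j] z)
      else 0))
      = ∑ j ∈ Finset.range i,
        ((-1 : k) ^ j * ((w - j).factorial : k) / ((j.factorial * w.factorial : ℕ) : k)) •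
          (X (⟨i - j - 1, by omega⟩ : Fin (n + 1)) * (⇑(dhat k n))^[j] z) := by
    rw [Finset.sum_range_succ, if_neg (lt_irrefl i), add_zero]
    exact Finset.sum_congr rfl fun j hj => if_pos (Finset.mem_range.mp hj)
  have h2 : (∑ j ∈ Finset.range (i + 1), (if 1 ≤ j then
        ((-1 : k) ^ (j - 1) * ((w - (j - 1)).factorial : k) /
            (((j - 1).factorial * w.factorial : ℕ) : k)) •
          (X (⟨i - j, by omega⟩ : Fin (n + 1)) * (⇑(dhat k n))^[j - 1] z)
      else 0))
      = ∑ j ∈ Finset.range i,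
        ((-1 : k) ^ j * ((w - j).factorial : k) / ((j.factorial * w.factorial : ℕ) : k)) •
          (X (⟨i - j - 1, by omega⟩ : Fin (n + 1)) * (⇑(dhat k n))^[j] z) := by
    rw [Finset.sum_range_succ']
    rw [if_neg (by omega), add_zero]
    refine Finset.sum_congr rfl fun j hj => ?_
    rw [if_pos (by omega)]
    rfl
  rw [h1, h2, sub_self]

end Tau

/-- For a nonzero kernel element `z` of weight `w` and
`0 ≤ i ≤ min(n, w)`, if `τ_i(z) ≠ 0` then `ord(τ_i(z)) = n + w − 2i`:
`d̂^{n+w−2i}(τ_i(z)) ≠ 0` and `d̂^{n+w−2i+1}(τ_i(z)) = 0`. -/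
theorem ord_tau (k : Type*) [Field k] [CharZero k] (n : ℕ)
    (z : MvPolynomial (Fin (n + 1)) k) (hz0 : z ≠ 0) (w : ℕ)
    (hd : weitz k n z = 0) (he : ee k n z = (w : k) • z)
    (i : ℕ) (hin : i ≤ n) (hiw : i ≤ w)
    (htau : tau k n w i hin z ≠ 0) :
    (⇑(dhat k n))^[n + w - 2 * i] (tau k n w i hin z) ≠ 0 ∧
    (⇑(dhat k n))^[n + w - 2 * i + 1] (tau k n w i hin z) = 0 := by
  have h2i : 2 * i ≤ n + w := by omega
  set N := n + w - 2 * i with hN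
  set τ := tau k n w i hin z with hτ
  have hNk : ((N : ℕ) : k) = (n : k) + w - 2 * i := by
    rw [hN, Nat.cast_sub h2i]
    push_cast
    ring
  have hDτ : weitz k n τ = 0 := weitz_tau w i hin hiw hd he
  have hEτ : ee k n τ = ((N : ℕ) : k) • τ := by
    rw [hτ, ee_tau w i hin hiw he, ← hNk]
  constructor
  · exact dhat_iter_ne_zero htau hDτ hEτ
  · have hu1 : weitz k n ((⇑(dhat k n))^[N + 1] τ) = 0 := by
      rw [weitz_dhat_iter hDτ hEτ N, sub_self, mul_zero, zero_smul]
    have hu2 : ee k n ((⇑(dhat k n))^[N + 1] τ) =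
        (((N : ℕ) : k) - 2 * ((N + 1 : ℕ) : k)) • (⇑(dhat k n))^[N + 1] τ :=
      ee_dhat_iter hEτ (N + 1)
    refine vanish (c := ((N : ℕ) : k) - 2 * ((N + 1 : ℕ) : k)) ?_ hu1 hu2
    intro s h
    have hcast : ((s + N + 2 : ℕ) : k) = 0 := by
      push_cast at h ⊢
      linear_combination -h
    rw [Nat.cast_eq_zero] at hcast
    omega
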